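/- (Halving step of the scaling lemma.) Let u : ℝ^d → N be Borel measurable. For every L > 0, ∬_{{(x,y) ∈ ℝ^d × ℝ^d : |x − y| ≤ L}} dist_N(u(x), u(y)) dx dy ≤ 2^{1+d} ∬_{{(x,z) ∈ ℝ^d × ℝ^d : |x − z| ≤ L/2}} dist_N(u(x), u(z)) dx dz. -/

import Mathlib

/-!
Split `dist (u x) (u y)` through the midpoint `m = midpoint ℝ x y` by the triangle inequality.
The swap `(x, y) ↦ (y, x)` preserves `{|x - y| ≤ L}` and `m`, so both halves have the same
integral. In the remaining one, substitute `y ↦ m` for fixed `x`: this contracts Haar measure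
by `2⁻¹` in each direction, so it costs a factor `2 ^ d`, and `|x - y| ≤ L` becomes
`|x - m| ≤ L / 2`.
-/

open MeasureTheory Module Set
open scoped ENNReal

section HaarMidpoint

variable {E : Type*} [NormedAddCommGroup E] [NormedSpace ℝ E] [MeasurableSpace E] [BorelSpace E]
  [FiniteDimensional ℝ E] (μ : Measure E) [μ.IsAddHaarMeasure]

theorem measurable_midpoint : Measurable fun p : E × E => midpoint ℝ p.1 p.2 := by
  simp_rw [midpoint_eq_smul_add]
  fun_prop

theorem lintegral_comp_midpoint_right (f : E → ℝ≥0∞) (x : E) :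
    ∫⁻ y, f (midpoint ℝ x y) ∂μ = 2 ^ finrank ℝ E * ∫⁻ z, f z ∂μ := by
  have hhalf : (2⁻¹ : ℝ) ≠ 0 := by norm_num
  calc ∫⁻ y, f (midpoint ℝ x y) ∂μ = ∫⁻ y, f ((2⁻¹ : ℝ) • y) ∂μ := by
        simp_rw [midpoint_eq_smul_add, invOf_eq_inv]
        exact lintegral_add_left_eq_self (fun y => f ((2⁻¹ : ℝ) • y)) x
    _ = ∫⁻ z, f z ∂(Measure.map ((2⁻¹ : ℝ) • ·) μ) :=
        ((Homeomorph.smulOfNeZero _ hhalf).measurableEmbedding.lintegral_map f).symm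
    _ = 2 ^ finrank ℝ E * ∫⁻ z, f z ∂μ := by
        rw [Measure.map_addHaar_smul μ hhalf, lintegral_smul_measure]
        simp [ENNReal.ofReal_pow]

theorem lintegral_prod_comp_midpoint {f : E × E → ℝ≥0∞} (hf : Measurable f) :
    ∫⁻ p, f (p.1, midpoint ℝ p.1 p.2) ∂μ.prod μ = 2 ^ finrank ℝ E * ∫⁻ p, f p ∂μ.prod μ := by
  rw [lintegral_prod (fun p : E × E => f (p.1, midpoint ℝ p.1 p.2))
      (hf.comp (measurable_fst.prodMk measurable_midpoint)).aemeasurable,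
    lintegral_prod _ hf.aemeasurable, ← lintegral_const_mul' _ _ (by simp)]
  exact lintegral_congr fun x => lintegral_comp_midpoint_right μ (fun z => f (x, z)) x

theorem measurableSet_dist_le (L : ℝ) : MeasurableSet {p : E × E | dist p.1 p.2 ≤ L} :=
  measurableSet_le (by fun_prop) measurable_const

theorem setLIntegral_dist_le_comp_midpoint {f : E × E → ℝ≥0∞} (hf : Measurable f) (L : ℝ) :
    ∫⁻ p in {p : E × E | dist p.1 p.2 ≤ L}, f (p.1, midpoint ℝ p.1 p.2) ∂μ.prod μ
      = 2 ^ finrank ℝ E * ∫⁻ p in {p : E × E | dist p.1 p.2 ≤ L / 2}, f p ∂μ.prod μ := by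
  have hpre : {p : E × E | dist p.1 p.2 ≤ L}
      = (fun p : E × E => (p.1, midpoint ℝ p.1 p.2)) ⁻¹' {p | dist p.1 p.2 ≤ L / 2} := by
    ext p
    simp [dist_left_midpoint (𝕜 := ℝ), le_div_iff₀']
  rw [← lintegral_indicator (measurableSet_dist_le L),
    ← lintegral_indicator (measurableSet_dist_le (L / 2)), hpre]
  -- `indicator (k ⁻¹' s) (f ∘ k) = indicator s f ∘ k` holds definitionally
  exact lintegral_prod_comp_midpoint μ (hf.indicator (measurableSet_dist_le _))

theorem setLIntegral_edist_dist_le_le_two_pow_mul_half {N : Type*} [PseudoEMetricSpace N]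
    [MeasurableSpace N] [OpensMeasurableSpace N] [SecondCountableTopology N]
    {u : E → N} (hu : Measurable u) (L : ℝ) :
    ∫⁻ p in {p : E × E | dist p.1 p.2 ≤ L}, edist (u p.1) (u p.2) ∂μ.prod μ
      ≤ 2 ^ (1 + finrank ℝ E)
          * ∫⁻ p in {p : E × E | dist p.1 p.2 ≤ L / 2}, edist (u p.1) (u p.2) ∂μ.prod μ := by
  set S := {p : E × E | dist p.1 p.2 ≤ L}
  have hSwap : Prod.swap ⁻¹' S = S := by
    ext p
    simp [S, dist_comm]
  have hToMid : Measurable fun p : E × E => edist (u p.1) (u (midpoint ℝ p.1 p.2)) :=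
    (hu.comp measurable_fst).edist (hu.comp measurable_midpoint)
  have hFromMid : ∫⁻ p in S, edist (u (midpoint ℝ p.1 p.2)) (u p.2) ∂μ.prod μ
      = ∫⁻ p in S, edist (u p.1) (u (midpoint ℝ p.1 p.2)) ∂μ.prod μ := by
    rw [← Measure.measurePreserving_swap.setLIntegral_comp_preimage_emb
      MeasurableEquiv.prodComm.measurableEmbedding _ S, hSwap]
    simp only [Prod.fst_swap, Prod.snd_swap, midpoint_comm, edist_comm]
  calc ∫⁻ p in S, edist (u p.1) (u p.2) ∂μ.prod μ
      ≤ ∫⁻ p in S, edist (u p.1) (u (midpoint ℝ p.1 p.2)) + edist (u (midpoint ℝ p.1 p.2)) (u p.2)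
          ∂μ.prod μ := lintegral_mono fun p => edist_triangle _ _ _
    _ = 2 * ∫⁻ p in S, edist (u p.1) (u (midpoint ℝ p.1 p.2)) ∂μ.prod μ := by
      rw [lintegral_add_left hToMid, hFromMid, two_mul]
    _ = 2 ^ (1 + finrank ℝ E)
          * ∫⁻ p in {p : E × E | dist p.1 p.2 ≤ L / 2}, edist (u p.1) (u p.2) ∂μ.prod μ := by
      rw [setLIntegral_dist_le_comp_midpoint μ (f := fun p : E × E => edist (u p.1) (u p.2))
        (by fun_prop) L, pow_add, pow_one, mul_assoc]

end HaarMidpoint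

theorem stmt_13_general (d : ℕ)
    {N : Type*} [MetricSpace N] [TopologicalSpace.SeparableSpace N]
    [MeasurableSpace N] [BorelSpace N]
    (u : EuclideanSpace ℝ (Fin d) → N) (hu : Measurable u)
    (L : ℝ) :
    (∫⁻ p in {p : EuclideanSpace ℝ (Fin d) × EuclideanSpace ℝ (Fin d) |
        dist p.1 p.2 ≤ L}, edist (u p.1) (u p.2))
      ≤ 2 ^ (1 + d)
          * ∫⁻ p in {p : EuclideanSpace ℝ (Fin d) × EuclideanSpace ℝ (Fin d) |
              dist p.1 p.2 ≤ L / 2}, edist (u p.1) (u p.2) := by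
  have := UniformSpace.secondCountable_of_separable N
  simpa only [finrank_euclideanSpace_fin, ← Measure.volume_eq_prod] using
    setLIntegral_edist_dist_le_le_two_pow_mul_half volume hu L

/-- Halving step of the scaling lemma: for `L > 0`,
`∬_{|x-y| ≤ L} dist (u x) (u y) ≤ 2^{1+d} ∬_{|x-z| ≤ L/2} dist (u x) (u z)`. -/
theorem stmt_13 (d : ℕ) (hd : 1 ≤ d)
    {N : Type*} [MetricSpace N] [CompleteSpace N] [TopologicalSpace.SeparableSpace N]
    [MeasurableSpace N] [BorelSpace N]
    (u : EuclideanSpace ℝ (Fin d) → N) (hu : Measurable u)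
    (L : ℝ) (hL : 0 < L) :
    (∫⁻ p in {p : EuclideanSpace ℝ (Fin d) × EuclideanSpace ℝ (Fin d) |
        dist p.1 p.2 ≤ L}, edist (u p.1) (u p.2))
      ≤ 2 ^ (1 + d)
          * ∫⁻ p in {p : EuclideanSpace ℝ (Fin d) × EuclideanSpace ℝ (Fin d) |
              dist p.1 p.2 ≤ L / 2}, edist (u p.1) (u p.2) :=
  stmt_13_general d u hu L
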